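/- Every Menger proper K-analytic space is σ-compact. -/

import Mathlib

open Set Function TopologicalSpace MeasureTheory

universe u

/-- A space is analytic if it is a continuous image of the Baire space `ℕ → ℕ`. -/
def IsAnalyticSpace (X : Type*) [TopologicalSpace X] : Prop :=
  ∃ f : (ℕ → ℕ) → X, Continuous f ∧ Surjective f

/-- A space is Lusin if it is an injective continuous image of the Baire space. -/
def IsLusinSpace (X : Type*) [TopologicalSpace X] : Prop :=
  ∃ f : (ℕ → ℕ) → X, Continuous f ∧ Injective f ∧ Surjective f

/-- A map is perfect if it is continuous, closed, and has compact fibers. -/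
def IsPerfectMap {X Y : Type*} [TopologicalSpace X] [TopologicalSpace Y] (f : X → Y) : Prop :=
  Continuous f ∧ IsClosedMap f ∧ ∀ y : Y, IsCompact (f ⁻¹' {y})

/-- The remainder `βX \ X` of a space in its Stone–Čech compactification. -/
def StoneCechRemainder (X : Type u) [TopologicalSpace X] : Set (StoneCech X) :=
  (Set.range (stoneCechUnit : X → StoneCech X))ᶜ

/-- A space is co-analytic if its Stone–Čech remainder is analytic. -/
def CoAnalytic (X : Type u) [TopologicalSpace X] : Prop :=
  IsAnalyticSpace ↥(StoneCechRemainder X)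

/-- A space is Čech-complete if it is a `Gδ` subset of its Stone–Čech compactification. -/
def CechComplete (X : Type u) [TopologicalSpace X] : Prop :=
  IsGδ (Set.range (stoneCechUnit : X → StoneCech X))

/-- A space is K-analytic if it is a continuous image of a Lindelöf Čech-complete
(Tychonoff) space. -/
def KAnalytic (X : Type u) [TopologicalSpace X] : Prop :=
  ∃ (Y : Type u) (_ : TopologicalSpace Y) (_ : T35Space Y),
    LindelofSpace Y ∧ CechComplete Y ∧ ∃ f : Y → X, Continuous f ∧ Surjective f

/-- A space is K-Lusin if it is an injective continuous image of a Lindelöf Čech-complete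
(Tychonoff) space. -/
def KLusin (X : Type u) [TopologicalSpace X] : Prop :=
  ∃ (Y : Type u) (_ : TopologicalSpace Y) (_ : T35Space Y),
    LindelofSpace Y ∧ CechComplete Y ∧ ∃ f : Y → X, Continuous f ∧ Injective f ∧ Surjective f

/-- The Menger property. -/
def MengerSpace (X : Type*) [TopologicalSpace X] : Prop :=
  ∀ U : ℕ → Set (Set X), (∀ n, ∀ u ∈ U n, IsOpen u) → (∀ n, ⋃₀ U n = univ) →
    ∃ V : ℕ → Set (Set X), (∀ n, V n ⊆ U n ∧ (V n).Finite) ∧ ⋃₀ (⋃ n, V n) = univ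

/-- The Rothberger property. -/
def RothbergerSpace (X : Type*) [TopologicalSpace X] : Prop :=
  ∀ U : ℕ → Set (Set X), (∀ n, ∀ u ∈ U n, IsOpen u) → (∀ n, ⋃₀ U n = univ) →
    ∃ V : ℕ → Set X, (∀ n, V n ∈ U n) ∧ (⋃ n, V n) = univ

/-- A space is productively Lindelöf if its product with every Lindelöf (Tychonoff)
space is Lindelöf. -/
def ProductivelyLindelof (X : Type u) [TopologicalSpace X] : Prop :=
  ∀ (Y : Type u) (_ : TopologicalSpace Y) (_ : T35Space Y),
    LindelofSpace Y → LindelofSpace (X × Y)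

/-- A Michael space is a Lindelöf (Tychonoff) space whose product with the Baire space
is not Lindelöf. -/
def ExistsMichaelSpace : Prop :=
  ∃ (Y : Type u) (_ : TopologicalSpace Y) (_ : T35Space Y),
    LindelofSpace Y ∧ ¬ LindelofSpace (Y × (ℕ → ℕ))

/-- The Hurewicz property: every Čech-complete space in which `X` embeds contains a
σ-compact subspace containing the image of `X`. -/
def HurewiczSpace (X : Type u) [TopologicalSpace X] : Prop :=
  ∀ (Y : Type u) (_ : TopologicalSpace Y) (_ : T35Space Y), CechComplete Y →
    ∀ f : X → Y, Topology.IsEmbedding f → ∃ S : Set Y, IsSigmaCompact S ∧ range f ⊆ S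

/-- A space is projectively σ-compact if each of its continuous images in a separable
metrizable space is σ-compact. -/
def ProjectivelySigmaCompact (X : Type u) [TopologicalSpace X] : Prop :=
  ∀ (M : Type u) (_ : TopologicalSpace M) (_ : SeparableSpace M) (_ : MetrizableSpace M)
    (f : X → M), Continuous f → IsSigmaCompact (range f)

/-- A space is projectively countable if each of its continuous images in a separable
metrizable space is countable. -/
def ProjectivelyCountable (X : Type u) [TopologicalSpace X] : Prop :=
  ∀ (M : Type u) (_ : TopologicalSpace M) (_ : SeparableSpace M) (_ : MetrizableSpace M)
    (f : X → M), Continuous f → (range f).Countable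

/-- The Alster property. -/
def AlsterSpace (X : Type*) [TopologicalSpace X] : Prop :=
  ∀ G : Set (Set X), (∀ g ∈ G, IsGδ g) → ⋃₀ G = univ →
    (∀ K : Set X, IsCompact K → ∃ F : Set (Set X), F ⊆ G ∧ F.Finite ∧ K ⊆ ⋃₀ F) →
    ∃ C : Set (Set X), C ⊆ G ∧ C.Countable ∧ ⋃₀ C = univ

/-- A compact set has countable character if it has a countable neighborhood base of
open sets. -/
def HasCountableChar {X : Type*} [TopologicalSpace X] (L : Set X) : Prop :=
  ∃ B : ℕ → Set X, (∀ n, IsOpen (B n) ∧ L ⊆ B n) ∧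
    ∀ U : Set X, IsOpen U → L ⊆ U → ∃ n, B n ⊆ U

/-- A space is of countable type if every compact set is contained in a compact set
of countable character. -/
def CountableType (X : Type*) [TopologicalSpace X] : Prop :=
  ∀ K : Set X, IsCompact K → ∃ L : Set X, IsCompact L ∧ K ⊆ L ∧ HasCountableChar L

/-- A space is nowhere locally compact if no point has a compact neighborhood. -/
def NowhereLocallyCompact (X : Type*) [TopologicalSpace X] : Prop :=
  ∀ x : X, ∀ K ∈ nhds x, ¬ IsCompact (K : Set X)

/-- Weight at most `c`: there is a basis of cardinality at most `c`. -/
def WeightLE (X : Type u) [TopologicalSpace X] (c : Cardinal.{u}) : Prop :=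
  ∃ B : Set (Set X), IsTopologicalBasis B ∧ Cardinal.mk B ≤ c

/-- A space is Frolík if it is homeomorphic to a closed subspace of a countable product
of σ-compact (Tychonoff) spaces. -/
def FrolikSpace (X : Type u) [TopologicalSpace X] : Prop :=
  ∃ (Y : ℕ → Type u) (_ : ∀ n, TopologicalSpace (Y n)) (_ : ∀ n, T35Space (Y n))
    (_ : ∀ n, SigmaCompactSpace (Y n)) (C : Set (∀ n, Y n)),
    IsClosed C ∧ Nonempty (X ≃ₜ ↥C)

/-- An s-space: some compactification has a countable open source for `X`. -/
def SSpace (X : Type u) [TopologicalSpace X] : Prop :=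
  ∃ (K : Type u) (_ : TopologicalSpace K) (_ : CompactSpace K) (_ : T2Space K)
    (e : X → K), Topology.IsEmbedding e ∧ DenseRange e ∧
      ∃ S : Set (Set K), S.Countable ∧ (∀ s ∈ S, IsOpen s) ∧
        ∃ F : Set (Set (Set K)), (∀ T ∈ F, T ⊆ S ∧ T.Nonempty) ∧
          range e = ⋃ T ∈ F, ⋂₀ T

/-- A space is Lindelöf p if it admits a perfect map onto a separable metrizable space. -/
def LindelofP (X : Type u) [TopologicalSpace X] : Prop :=
  ∃ (M : Type u) (_ : TopologicalSpace M) (_ : SeparableSpace M) (_ : MetrizableSpace M)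
    (f : X → M), IsPerfectMap f ∧ Surjective f

/-- A space is proper K-analytic if it admits a perfect map onto an analytic subspace
of `ℝ^ω`. -/
def ProperKAnalytic (X : Type u) [TopologicalSpace X] : Prop :=
  ∃ A : Set (ℕ → ℝ), IsAnalyticSpace ↥A ∧ ∃ f : X → ↥A, IsPerfectMap f ∧ Surjective f

/-- A space is proper K-Lusin if it admits a perfect map onto a Lusin subspace of `ℝ^ω`. -/
def ProperKLusin (X : Type u) [TopologicalSpace X] : Prop :=
  ∃ A : Set (ℕ → ℝ), IsLusinSpace ↥A ∧ ∃ f : X → ↥A, IsPerfectMap f ∧ Surjective f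

/-- A space is absolute Borel if, viewed as a subset of its Stone–Čech compactification,
it belongs to the σ-algebra generated by the closed sets. -/
def AbsoluteBorel (X : Type u) [TopologicalSpace X] : Prop :=
  MeasurableSet[MeasurableSpace.generateFrom {s : Set (StoneCech X) | IsClosed s}]
    (Set.range (stoneCechUnit : X → StoneCech X))

/-!
Hurewicz's argument. Let `g : ℕ^ℕ → P` be continuous into a metric space, with range in no
σ-compact set. Call `x` bad if no neighbourhood of `x` is mapped into a σ-compact set. The images
of the good points lie in one σ-compact set `F`, because `ℕ^ℕ` is second countable. Below a bad
point, the image of a cylinder minus `F` has non-compact closure. So it contains an injective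
sequence with no cluster point, and these points are images of bad points. Around that sequence
there are small, pairwise disjoint balls that form a locally finite family. Iterating this gives a
tree of balls indexed by finite sequences. Along each `b : ℕ^ℕ` the cylinders shrink to one point,
and the map sending `b` to the image of that point has closed range. Its level-`n` balls, together
with the complement of the range, form open covers that defeat Menger's property: a branch that at
every level `n` avoids the finitely many balls selected there is not covered. Menger's property
passes to continuous images, and σ-compactness pulls back along perfect maps. These two facts
reduce the theorem to the metrizable analytic case.
-/

open Filter Topology Metric PiNat

section Topology

variable {X Y : Type*} [TopologicalSpace X] [TopologicalSpace Y]

lemma IsSigmaCompact.union {s t : Set X} (hs : IsSigmaCompact s) (ht : IsSigmaCompact t) :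
    IsSigmaCompact (s ∪ t) := by
  rw [union_eq_iUnion]
  exact isSigmaCompact_iUnion _ (Bool.forall_bool.2 ⟨ht, hs⟩)

lemma IsProperMap.sigmaCompactSpace {f : X → Y} (hf : IsProperMap f) [SigmaCompactSpace Y] :
    SigmaCompactSpace X := by
  refine ⟨⟨fun n => f ⁻¹' compactCovering Y n,
    fun n => hf.isCompact_preimage (isCompact_compactCovering Y n), ?_⟩⟩
  rw [← preimage_iUnion, iUnion_compactCovering, preimage_univ]

lemma locallyFinite_singleton_iff {x : ℕ → X} :
    LocallyFinite (fun n => ({x n} : Set X)) ↔ ∀ p, ¬MapClusterPt p atTop x := by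
  simp only [LocallyFinite, mapClusterPt_iff_frequently, Nat.frequently_atTop_iff_infinite,
    singleton_inter_nonempty, not_forall, not_infinite, exists_prop]

lemma LocallyFinite.exists_injective_comp {x : ℕ → X}
    (hx : LocallyFinite fun n => ({x n} : Set X)) : ∃ k : ℕ → ℕ, Injective (x ∘ k) := by
  have hinf : (range x).Infinite := fun hfin => infinite_univ (α := ℕ) <| by
    simpa using hfin.preimage' (f := x) fun p _ => by
      simpa [preimage, eq_comm] using hx.point_finite p
  refine ⟨rangeSplitting x ∘ hinf.natEmbedding _, ?_⟩
  have : x ∘ (rangeSplitting x ∘ hinf.natEmbedding _) = Subtype.val ∘ hinf.natEmbedding _ :=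
    funext fun n => apply_rangeSplitting x _
  rw [this]
  exact Subtype.val_injective.comp (hinf.natEmbedding _).injective

end Topology

section Menger

variable {X Y : Type*} [TopologicalSpace X] [TopologicalSpace Y]

lemma MengerSpace.of_surjective (hM : MengerSpace X) {f : X → Y} (hf : Continuous f)
    (hfs : Surjective f) : MengerSpace Y := by
  intro U hU hcov
  obtain ⟨V', hV', hV'cov⟩ := hM (fun n => preimage f '' U n)
    (by rintro n - ⟨u, hu, rfl⟩; exact (hU n u hu).preimage hf)
    (fun n => by
      rw [sUnion_image, ← preimage_iUnion₂, ← sUnion_eq_biUnion, hcov n, preimage_univ])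
  choose V hVU hVfin hVeq using fun n => (hV' n).2.exists_subset_finite_image_eq (hV' n).1
  refine ⟨V, fun n => ⟨hVU n, hVfin n⟩, eq_univ_of_forall fun y => ?_⟩
  obtain ⟨x, rfl⟩ := hfs y
  obtain ⟨v, hv, hxv⟩ := hV'cov.symm ▸ mem_univ x
  obtain ⟨n, hvn⟩ := mem_iUnion.1 hv
  rw [← hVeq n] at hvn
  obtain ⟨u, hu, rfl⟩ := hvn
  exact ⟨u, mem_iUnion.2 ⟨n, hu⟩, hxv⟩

lemma MengerSpace.exists_bound (hM : MengerSpace X) {U : ℕ → ℕ → Set X}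
    (hU : ∀ n k, IsOpen (U n k)) (hcov : ∀ n, ⋃ k, U n k = univ) :
    ∃ N : ℕ → ℕ, ∀ x, ∃ n k, k ≤ N n ∧ x ∈ U n k := by
  obtain ⟨V, hV, hVcov⟩ := hM (fun n => range (U n)) (by rintro n - ⟨k, rfl⟩; exact hU n k)
    (fun n => by rw [sUnion_range, hcov n])
  choose K _ hKfin hKeq using fun n =>
    (hV n).2.exists_subset_finite_image_eq ((hV n).1.trans (image_univ (f := U n)).ge)
  choose N hN using fun n => (hKfin n).bddAbove
  refine ⟨N, fun x => ?_⟩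
  obtain ⟨v, hv, hxv⟩ := hVcov.symm ▸ mem_univ x
  obtain ⟨n, hvn⟩ := mem_iUnion.1 hv
  rw [← hKeq n] at hvn
  obtain ⟨k, hk, rfl⟩ := hvn
  exact ⟨n, k, hN n hk, hxv⟩

lemma not_mengerSpace_of_isClosed_range {f : (ℕ → ℕ) → X} (hf : IsClosed (range f))
    {U : ℕ → ℕ → Set X} (hU : ∀ n k, IsOpen (U n k)) (hmem : ∀ b n, f b ∈ U n (b n))
    (hdet : ∀ b n k, f b ∈ U n k → b n = k) : ¬MengerSpace X := by
  intro hM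
  let U' : ℕ → ℕ → Set X := fun n k => match k with
    | 0 => (range f)ᶜ
    | k + 1 => U n k
  obtain ⟨N, hN⟩ := hM.exists_bound (U := U')
    (fun n k => by cases k; exacts [hf.isOpen_compl, hU n _])
    (fun n => eq_univ_of_forall fun x => by
      by_cases hx : x ∈ range f
      · obtain ⟨b, rfl⟩ := hx
        exact mem_iUnion.2 ⟨b n + 1, hmem b n⟩
      · exact mem_iUnion.2 ⟨0, hx⟩)
  obtain ⟨n, k, hk, hx⟩ := hN (f N)
  cases k with
  | zero => exact hx (mem_range_self N)
  | succ k => have := hdet N n k hx; omega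

end Menger

section SigmaCompactImage

variable {X Y : Type*} [TopologicalSpace X] [TopologicalSpace Y]

def HasSigmaCompactImageNear (g : X → Y) (x : X) : Prop :=
  ∃ U ∈ 𝓝 x, ∃ F : Set Y, IsSigmaCompact F ∧ g '' U ⊆ F

lemma exists_isSigmaCompact_forall_hasSigmaCompactImageNear [SecondCountableTopology X]
    (g : X → Y) :
    ∃ F : Set Y, IsSigmaCompact F ∧ ∀ x, HasSigmaCompactImageNear g x → g x ∈ F := by
  choose U hU F hF hUF using fun x : {x // HasSigmaCompactImageNear g x} => x.2
  obtain ⟨T, hTc, hT⟩ :=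
    isOpen_iUnion_countable (fun x => interior (U x)) fun _ => isOpen_interior
  refine ⟨⋃ x ∈ T, F x, isSigmaCompact_biUnion hTc fun x _ => hF x, fun x hx => ?_⟩
  have : x ∈ ⋃ y ∈ T, interior (U y) :=
    hT ▸ mem_iUnion.2 ⟨⟨x, hx⟩, mem_interior_iff_mem_nhds.2 (hU ⟨x, hx⟩)⟩
  obtain ⟨y, hyT, hxy⟩ := mem_iUnion₂.1 this
  exact mem_iUnion₂.2 ⟨y, hyT, hUF y (mem_image_of_mem g (interior_subset hxy))⟩

lemma not_isCompact_closure_image_diff {g : X → Y} {x : X} (hx : ¬HasSigmaCompactImageNear g x)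
    {U : Set X} (hU : U ∈ 𝓝 x) {F : Set Y} (hF : IsSigmaCompact F) :
    ¬IsCompact (closure (g '' U \ F)) := fun hc =>
  hx ⟨U, hU, closure (g '' U \ F) ∪ F, hc.isSigmaCompact.union hF, fun y hy => by
    by_cases hyF : y ∈ F
    exacts [Or.inr hyF, Or.inl (subset_closure ⟨hy, hyF⟩)]⟩

end SigmaCompactImage

section MetricSpace

variable {P : Type*} [MetricSpace P]

lemma exists_seq_locallyFinite_of_not_isCompact_closure {S : Set P}
    (hS : ¬IsCompact (closure S)) :
    ∃ x : ℕ → P, (∀ n, x n ∈ S) ∧ LocallyFinite fun n => ({x n} : Set P) := by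
  by_contra! h
  refine hS (IsSeqCompact.isCompact fun y hy => ?_)
  choose x hxS hxy using fun n =>
    Metric.mem_closure_iff.1 (hy n) _ (Nat.one_div_pos_of_nat (n := n))
  obtain ⟨p, hp⟩ : ∃ p, MapClusterPt p atTop x := by
    simpa [locallyFinite_singleton_iff] using h x hxS
  obtain ⟨φ, hφ, hxφ⟩ := hp.tendsto_subseq
  have hyφ : Tendsto (y ∘ φ) atTop (𝓝 p) :=
    hxφ.congr_dist <| squeeze_zero (fun _ => dist_nonneg)
      (fun n => (dist_comm _ _).le.trans (hxy (φ n)).le)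
      (tendsto_one_div_add_atTop_nhds_zero_nat.comp hφ.tendsto_atTop)
  exact ⟨p, isClosed_closure.mem_of_tendsto hyφ (Eventually.of_forall fun n => hy (φ n)), φ, hφ,
    hyφ⟩

lemma LocallyFinite.exists_pos_le_dist {w : ℕ → P}
    (hlf : LocallyFinite fun n => ({w n} : Set P)) (hw : Injective w) (i : ℕ) :
    ∃ δ > 0, ∀ j ≠ i, δ ≤ dist (w i) (w j) := by
  obtain ⟨t, ht, hfin⟩ := hlf (w i)
  have hfar : (w '' ({j | ({w j} ∩ t).Nonempty} \ {i}))ᶜ ∈ 𝓝 (w i) :=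
    ((hfin.sdiff).image w).isClosed.compl_mem_nhds fun ⟨j, hj, hji⟩ => hj.2 (hw hji)
  obtain ⟨δ, hδ, hball⟩ := Metric.mem_nhds_iff.1 (inter_mem ht hfar)
  refine ⟨δ, hδ, fun j hji => not_lt.1 fun hlt => ?_⟩
  have hj := hball (mem_ball'.2 hlt)
  exact hj.2 ⟨j, ⟨⟨w j, rfl, hj.1⟩, hji⟩, rfl⟩

lemma LocallyFinite.ball_of_tendsto_zero {ι : Type*} {w : ι → P}
    (hlf : LocallyFinite fun i => ({w i} : Set P)) {r : ι → ℝ} (hr : Tendsto r cofinite (𝓝 0)) :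
    LocallyFinite fun i => ball (w i) (r i) := by
  intro p
  obtain ⟨t, ht, hfin⟩ := hlf p
  obtain ⟨ε, hε, hεt⟩ := Metric.mem_nhds_iff.1 ht
  have hsmall := eventually_cofinite.1 (hr.eventually (gt_mem_nhds (half_pos hε)))
  refine ⟨ball p (ε / 2), ball_mem_nhds p (half_pos hε), (hfin.union hsmall).subset ?_⟩
  rintro i ⟨q, hqi, hqp⟩
  by_cases hri : r i < ε / 2
  · refine Or.inl ⟨w i, rfl, hεt ?_⟩
    calc dist (w i) p ≤ dist q (w i) + dist q p := dist_triangle_left _ _ _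
      _ < ε / 2 + ε / 2 := add_lt_add (hri.trans' hqi) hqp
      _ = ε := add_halves ε
  · exact Or.inr hri

lemma exists_disjoint_locallyFinite_balls {w : ℕ → P} (hw : Injective w)
    (hlf : LocallyFinite fun n => ({w n} : Set P)) {W : Set P} (hW : IsOpen W)
    (hwW : ∀ n, w n ∈ W) {ε : ℝ} (hε : 0 < ε) :
    ∃ ρ : ℕ → ℝ, (∀ n, 0 < ρ n ∧ ρ n ≤ ε ∧ ball (w n) (ρ n) ⊆ W) ∧
      Pairwise (Disjoint on fun n => ball (w n) (ρ n)) ∧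
      LocallyFinite fun n => ball (w n) (ρ n) := by
  choose δ hδ hδw using hlf.exists_pos_le_dist hw
  choose η hη hηW using fun n => Metric.isOpen_iff.1 hW _ (hwW n)
  set ρ : ℕ → ℝ := fun n => min (min (δ n / 2) (η n)) (min ε (1 / (n + 1)))
  have hρ : ∀ n, 0 < ρ n := fun n =>
    lt_min (lt_min (half_pos (hδ n)) (hη n)) (lt_min hε Nat.one_div_pos_of_nat)
  refine ⟨ρ, fun n => ⟨hρ n, (min_le_right _ _).trans (min_le_left _ _),
    (ball_subset_ball ((min_le_left _ _).trans (min_le_right _ _))).trans (hηW n)⟩,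
    fun i j hij => ball_disjoint_ball ?_, hlf.ball_of_tendsto_zero ?_⟩
  · have hi : ρ i ≤ δ i / 2 := (min_le_left _ _).trans (min_le_left _ _)
    have hj : ρ j ≤ δ j / 2 := (min_le_left _ _).trans (min_le_left _ _)
    have := hδw i j hij.symm
    have := dist_comm (w i) (w j) ▸ hδw j i hij
    linarith
  · rw [Nat.cofinite_eq_atTop]
    exact squeeze_zero (fun n => (hρ n).le)
      (fun n => (min_le_right _ _).trans (min_le_right _ _)) tendsto_one_div_add_atTop_nhds_zero_nat

end MetricSpace

namespace PiNat

variable {E : ℕ → Type*}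

lemma cylinder_subset_cylinder {x y : ∀ n, E n} {m n : ℕ} (hy : y ∈ cylinder x m) (h : m ≤ n) :
    cylinder y n ⊆ cylinder x m :=
  (cylinder_anti y h).trans (mem_cylinder_iff_eq.1 hy).le

lemma eventually_cylinder_subset [∀ n, TopologicalSpace (E n)] [∀ n, DiscreteTopology (E n)]
    {x : ∀ n, E n} {V : Set (∀ n, E n)} (hV : V ∈ 𝓝 x) : ∀ᶠ n in atTop, cylinder x n ⊆ V := by
  obtain ⟨-, ⟨y, n, rfl⟩, hx, hyV⟩ := (isTopologicalBasis_cylinders E).mem_nhds_iff.1 hV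
  exact eventually_atTop.2 ⟨n, fun m hm => (cylinder_subset_cylinder hx hm).trans hyV⟩

lemma diag_mem_cylinder {x : ℕ → ∀ n, E n} {len : ℕ → ℕ}
    (hanti : Antitone fun n => cylinder (x n) (len n)) (hlen : ∀ n, n ≤ len n) (n : ℕ) :
    (fun i => x (i + 1) i) ∈ cylinder (x n) (len n) := fun i hi => by
  have hn := hanti (le_max_left n (i + 1)) (self_mem_cylinder _ _)
  have hi' := hanti (le_max_right n (i + 1)) (self_mem_cylinder _ _)
  exact (hi' i (hlen (i + 1))).symm.trans (hn i hi)

lemma exists_forall_of_exists_update {Q : ℕ → (∀ n, E n) → Prop}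
    (hQ : ∀ n x y, y ∈ cylinder x n → Q n x → Q n y) {x₀ : ∀ n, E n} (h₀ : Q 0 x₀)
    (hstep : ∀ n x, Q n x → ∃ e, Q (n + 1) (update x n e)) : ∃ b, ∀ n, Q n b := by
  have hstep' : ∀ n x, ∃ e, Q n x → Q (n + 1) (update x n e) := fun n x => by
    by_cases h : Q n x
    · obtain ⟨e, he⟩ := hstep n x h
      exact ⟨e, fun _ => he⟩
    · exact ⟨x n, fun h' => absurd h' h⟩
  choose e he using hstep'
  let x : ℕ → ∀ n, E n := fun n => Nat.rec x₀ (fun n y => update y n (e n y)) n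
  have hx : ∀ n, Q n (x n) := fun n => Nat.rec h₀ (fun n ih => he n (x n) ih) n
  have hanti : Antitone fun n => cylinder (x n) n := antitone_nat_of_succ_le fun n =>
    cylinder_subset_cylinder (update_mem_cylinder _ _ _) n.le_succ
  exact ⟨_, fun n => hQ n _ _ (diag_mem_cylinder hanti (fun _ => le_rfl) n) (hx n)⟩

end PiNat

namespace Hurewicz

variable {P : Type*} [MetricSpace P]

/-- A node of the tree: the cylinder `cylinder pt len` together with an open set `nbhd` of `P`
which, for a valid node, contains its image. -/
structure Node (P : Type*) where
  pt : ℕ → ℕ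
  len : ℕ
  nbhd : Set P

structure Node.Valid (g : (ℕ → ℕ) → P) (d : Node P) : Prop where
  not_near : ¬HasSigmaCompactImageNear g d.pt
  isOpen : IsOpen d.nbhd
  image_subset : g '' cylinder d.pt d.len ⊆ d.nbhd

structure IsChildFamily (g : (ℕ → ℕ) → P) (d : Node P) (ε : ℝ) (c : ℕ → Node P) : Prop where
  valid : ∀ k, (c k).Valid g
  pt_mem : ∀ k, (c k).pt ∈ cylinder d.pt d.len
  len_lt : ∀ k, d.len < (c k).len
  nbhd_subset : ∀ k, (c k).nbhd ⊆ d.nbhd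
  nbhd_subset_ball : ∀ k, (c k).nbhd ⊆ ball (g (c k).pt) ε
  disjoint : Pairwise (Disjoint on fun k => (c k).nbhd)
  locallyFinite : LocallyFinite fun k => (c k).nbhd

def HasChildFamilies (g : (ℕ → ℕ) → P) : Prop :=
  ∀ d : Node P, d.Valid g → ∀ ε > 0, ∃ c, IsChildFamily g d ε c

variable {g : (ℕ → ℕ) → P}

lemma IsChildFamily.cylinder_subset {d : Node P} {ε : ℝ} {c : ℕ → Node P}
    (h : IsChildFamily g d ε c) (k : ℕ) : cylinder (c k).pt (c k).len ⊆ cylinder d.pt d.len :=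
  cylinder_subset_cylinder (h.pt_mem k) (h.len_lt k).le

/-- The children are centred at images of points of `cylinder d.pt d.len` outside `F`; these
points are bad, since `F` contains the image of every good point. -/
lemma Node.Valid.exists_isChildFamily (hg : Continuous g) {F : Set P} (hF : IsSigmaCompact F)
    (hgF : ∀ x, HasSigmaCompactImageNear g x → g x ∈ F) {d : Node P} (hd : d.Valid g)
    {ε : ℝ} (hε : 0 < ε) : ∃ c, IsChildFamily g d ε c := by
  obtain ⟨x, hxS, hxlf⟩ := exists_seq_locallyFinite_of_not_isCompact_closure <|
    not_isCompact_closure_image_diff hd.not_near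
      ((isOpen_cylinder _ _ _).mem_nhds (self_mem_cylinder d.pt d.len)) hF
  obtain ⟨k, hk⟩ := hxlf.exists_injective_comp
  choose y hy hyx using fun n => (hxS (k n)).1
  have hw : g ∘ y = x ∘ k := funext hyx
  obtain ⟨ρ, hρ, hdisj, hlf⟩ := exists_disjoint_locallyFinite_balls (w := g ∘ y) (hw ▸ hk)
    (hw ▸ hxlf.comp_injective hk.of_comp) hd.isOpen
    (fun n => hd.image_subset (mem_image_of_mem g (hy n))) hε
  choose m hmρ hm using fun n => ((eventually_cylinder_subset
    ((hg.tendsto (y n)) (ball_mem_nhds _ (hρ n).1))).and (eventually_gt_atTop d.len)).exists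
  refine ⟨fun n => ⟨y n, m n, ball (g (y n)) (ρ n)⟩, fun n => ⟨fun hnear => ?_, isOpen_ball,
    image_subset_iff.2 (hmρ n)⟩, hy, hm, fun n => (hρ n).2.2,
    fun n => ball_subset_ball (hρ n).2.1, hdisj, hlf⟩
  exact (hxS (k n)).2 (hyx n ▸ hgF _ hnear)

open scoped Classical in
noncomputable def Node.children (g : (ℕ → ℕ) → P) (ε : ℝ) (d : Node P) : ℕ → Node P :=
  if h : ∃ c, IsChildFamily g d ε c then h.choose else fun _ => d

lemma Node.isChildFamily_children {d : Node P} {ε : ℝ} (h : ∃ c, IsChildFamily g d ε c) :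
    IsChildFamily g d ε (d.children g ε) := by
  rw [Node.children, dif_pos h]
  exact h.choose_spec

noncomputable def node (g : (ℕ → ℕ) → P) (root : Node P) (b : ℕ → ℕ) : ℕ → Node P
  | 0 => root
  | n + 1 => (node g root b n).children g (1 / ((n : ℝ) + 1)) (b n)

section Tree

variable {root : Node P}

lemma node_congr {b b' : ℕ → ℕ} : ∀ {n}, b' ∈ cylinder b n → node g root b' n = node g root b n
  | 0, _ => rfl
  | n + 1, h => by
    simp only [node, node_congr (cylinder_anti b n.le_succ h), h n n.lt_succ_self]

lemma node_update_succ (b : ℕ → ℕ) (n k : ℕ) :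
    node g root (update b n k) (n + 1) = (node g root b n).children g (1 / ((n : ℝ) + 1)) k := by
  rw [node, node_congr (update_mem_cylinder b n k), update_self]

lemma valid_node (hchild : HasChildFamilies g) (hroot : root.Valid g) (b : ℕ → ℕ) :
    ∀ n, (node g root b n).Valid g
  | 0 => hroot
  | n + 1 => (Node.isChildFamily_children
      (hchild _ (valid_node hchild hroot b n) _ Nat.one_div_pos_of_nat)).valid (b n)

lemma isChildFamily_node (hchild : HasChildFamilies g) (hroot : root.Valid g) (b : ℕ → ℕ)
    (n : ℕ) : IsChildFamily g (node g root b n) (1 / ((n : ℝ) + 1))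
      ((node g root b n).children g (1 / ((n : ℝ) + 1))) :=
  Node.isChildFamily_children (hchild _ (valid_node hchild hroot b n) _ Nat.one_div_pos_of_nat)

lemma le_len_node (hchild : HasChildFamilies g) (hroot : root.Valid g) (b : ℕ → ℕ) :
    ∀ n, n ≤ (node g root b n).len
  | 0 => Nat.zero_le _
  | n + 1 =>
    (le_len_node hchild hroot b n).trans_lt ((isChildFamily_node hchild hroot b n).len_lt _)

noncomputable def branchPoint (g : (ℕ → ℕ) → P) (root : Node P) (b : ℕ → ℕ) : ℕ → ℕ :=
  fun i => (node g root b (i + 1)).pt i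

lemma branchPoint_mem_cylinder (hchild : HasChildFamilies g) (hroot : root.Valid g)
    (b : ℕ → ℕ) (n : ℕ) :
    branchPoint g root b ∈ cylinder (node g root b n).pt (node g root b n).len :=
  diag_mem_cylinder (x := fun n => (node g root b n).pt) (len := fun n => (node g root b n).len)
    (antitone_nat_of_succ_le fun n => (isChildFamily_node hchild hroot b n).cylinder_subset (b n))
    (le_len_node hchild hroot b) n

lemma branchPoint_mem_nbhd (hchild : HasChildFamilies g) (hroot : root.Valid g)
    (b : ℕ → ℕ) (n : ℕ) : g (branchPoint g root b) ∈ (node g root b n).nbhd :=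
  (valid_node hchild hroot b n).image_subset
    (mem_image_of_mem g (branchPoint_mem_cylinder hchild hroot b n))

lemma image_cylinder_subset_nbhd (hchild : HasChildFamilies g) (hroot : root.Valid g)
    (b : ℕ → ℕ) (n : ℕ) :
    (fun b => g (branchPoint g root b)) '' cylinder b n ⊆ (node g root b n).nbhd := by
  rintro _ ⟨b', hb', rfl⟩
  rw [← node_congr hb']
  exact branchPoint_mem_nbhd hchild hroot b' n

lemma mem_cylinder_of_nbhd_inter_nonempty (hchild : HasChildFamilies g) (hroot : root.Valid g)
    {b b' : ℕ → ℕ} :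
    ∀ {n}, ((node g root b n).nbhd ∩ (node g root b' n).nbhd).Nonempty → b ∈ cylinder b' n
  | 0, _ => by simp
  | n + 1, h => by
    have hn : b ∈ cylinder b' n := mem_cylinder_of_nbhd_inter_nonempty hchild hroot <|
      h.mono (inter_subset_inter ((isChildFamily_node hchild hroot b n).nbhd_subset _)
        ((isChildFamily_node hchild hroot b' n).nbhd_subset _))
    have hbn : b n = b' n := by
      by_contra hne
      simp only [node, node_congr hn] at h
      exact not_disjoint_iff_nonempty_inter.2 h
        ((isChildFamily_node hchild hroot b' n).disjoint hne)
    intro i hi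
    rcases Nat.lt_succ_iff_lt_or_eq.1 hi with hi | rfl
    exacts [hn i hi, hbn]

/-- A point in the closure of the image of `cylinder x n` is in the closure of the image of some
`cylinder (update x n k) (n + 1)`, because the children of a node form a locally finite family.
Iterating this yields a branch whose radii shrink to `0`. -/
lemma isClosed_range_branchPoint (hchild : HasChildFamilies g) (hroot : root.Valid g) :
    IsClosed (range fun b => g (branchPoint g root b)) := by
  set f := fun b => g (branchPoint g root b)
  refine closure_subset_iff_isClosed.1 fun p hp => ?_
  obtain ⟨b, hb⟩ := exists_forall_of_exists_update
    (Q := fun n x => p ∈ closure (f '' cylinder x n))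
    (fun n x y hy h => by rwa [mem_cylinder_iff_eq.1 hy]) (x₀ := fun _ => 0) (by simpa using hp)
    fun n x hx => by
      have hlf : LocallyFinite fun k => f '' cylinder (update x n k) (n + 1) :=
        (isChildFamily_node hchild hroot x n).locallyFinite.subset fun k => by
          rw [← node_update_succ]
          exact image_cylinder_subset_nbhd hchild hroot _ _
      rwa [← iUnion_cylinder_update x n, image_iUnion, hlf.closure_iUnion, mem_iUnion] at hx
  refine ⟨b, eq_of_forall_dist_le fun ε hε => ?_⟩
  obtain ⟨n, hn⟩ := exists_nat_one_div_lt (half_pos hε)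
  have hball : f '' cylinder b (n + 1) ⊆ ball (g (node g root b (n + 1)).pt) (1 / ((n : ℝ) + 1)) :=
    (image_cylinder_subset_nbhd hchild hroot b (n + 1)).trans
      ((isChildFamily_node hchild hroot b n).nbhd_subset_ball (b n))
  have hfb := hball ⟨b, self_mem_cylinder b _, rfl⟩
  have hpc := (closure_mono hball).trans closure_ball_subset_closedBall (hb (n + 1))
  rw [mem_ball] at hfb
  rw [mem_closedBall] at hpc
  calc dist (f b) p ≤ dist (f b) _ + dist p _ := dist_triangle_right _ _ _
    _ ≤ 1 / ((n : ℝ) + 1) + 1 / ((n : ℝ) + 1) := add_le_add hfb.le hpc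
    _ ≤ ε := by linarith

end Tree

end Hurewicz

open Hurewicz in
theorem not_mengerSpace_of_range_not_subset_isSigmaCompact {P : Type*} [MetricSpace P]
    {g : (ℕ → ℕ) → P} (hg : Continuous g)
    (hrange : ¬∃ F : Set P, IsSigmaCompact F ∧ range g ⊆ F) : ¬MengerSpace P := by
  obtain ⟨F, hF, hgF⟩ := exists_isSigmaCompact_forall_hasSigmaCompactImageNear g
  obtain ⟨y₀, hy₀⟩ : ∃ y, ¬HasSigmaCompactImageNear g y := by
    by_contra! h
    exact hrange ⟨F, hF, range_subset_iff.2 fun y => hgF y (h y)⟩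
  have hchild : HasChildFamilies g := fun d hd ε hε => hd.exists_isChildFamily hg hF hgF hε
  have hroot : (⟨y₀, 0, univ⟩ : Node P).Valid g := ⟨hy₀, isOpen_univ, subset_univ _⟩
  refine not_mengerSpace_of_isClosed_range (isClosed_range_branchPoint hchild hroot)
    (U := fun n k => ⋃ (b : ℕ → ℕ) (_ : b n = k), (node g _ b (n + 1)).nbhd)
    (fun n k => isOpen_biUnion fun b _ => (valid_node hchild hroot b (n + 1)).isOpen)
    (fun b n => mem_iUnion₂.2 ⟨b, rfl, branchPoint_mem_nbhd hchild hroot b (n + 1)⟩)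
    fun b n k hb => ?_
  obtain ⟨b', rfl, hb'⟩ := mem_iUnion₂.1 hb
  exact mem_cylinder_of_nbhd_inter_nonempty hchild hroot
    ⟨_, branchPoint_mem_nbhd hchild hroot b (n + 1), hb'⟩ n n.lt_succ_self

theorem IsAnalyticSpace.sigmaCompactSpace_of_mengerSpace {P : Type*} [TopologicalSpace P]
    [MetrizableSpace P] (hP : IsAnalyticSpace P) (hM : MengerSpace P) : SigmaCompactSpace P := by
  let := metrizableSpaceMetric P
  obtain ⟨g, hg, hgs⟩ := hP
  by_contra hσ
  refine not_mengerSpace_of_range_not_subset_isSigmaCompact hg (fun ⟨F, hF, hgF⟩ => hσ ?_) hM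
  rw [hgs.range_eq, univ_subset_iff] at hgF
  exact isSigmaCompact_univ_iff.1 (hgF ▸ hF)

theorem menger_properKAnalytic_sigmaCompact_general
    (X : Type u) [TopologicalSpace X]
    (hM : MengerSpace X) (hK : ProperKAnalytic X) : SigmaCompactSpace X := by
  obtain ⟨A, hA, f, hf, hfs⟩ := hK
  have := hA.sigmaCompactSpace_of_mengerSpace (hM.of_surjective hf.1 hfs)
  exact (isProperMap_iff_isClosedMap_and_compact_fibers.2 hf).sigmaCompactSpace

/-- Menger proper K-analytic spaces are σ-compact. -/
theorem menger_properKAnalytic_sigmaCompact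
    (X : Type u) [TopologicalSpace X] [T35Space X]
    (hM : MengerSpace X) (hK : ProperKAnalytic X) : SigmaCompactSpace X :=
  menger_properKAnalytic_sigmaCompact_general X hM hK
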